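/- arXiv:0911.5724 — 2 statements merged into one kernel-verified Lean document; each statement's English description precedes it below -/
import Mathlib

section
/- Let (M, μ) be a σ-finite measure space, n ≥ 1, let H ⊆ ℝⁿ be a polarizer, and let 1 ≤ s < ∞. For all measurable functions u, v : M × ℝⁿ → [0, ∞), polarization is non-expansive: ∫ |u^H − v^H|^s d(μ ⊗ vol) ≤ ∫ |u − v|^s d(μ ⊗ vol) (both sides taken in [0, ∞]). -/
open MeasureTheory Metric
open scoped RealInnerProductSpace ENNReal

noncomputable section

/-- Reflection of `ℝⁿ` across the hyperplane `{y : ⟨y, e⟩ = c}`. -/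
def reflectHyp {n : ℕ} (e : EuclideanSpace ℝ (Fin n)) (c : ℝ)
    (y : EuclideanSpace ℝ (Fin n)) : EuclideanSpace ℝ (Fin n) :=
  y - (2 * (⟪y, e⟫ - c)) • e

/-- Polarization of `u : M × ℝⁿ → ℝ` with respect to the polarizer
`H = {y : ⟨y, e⟩ > c}`. -/
def polarize {M : Type*} {n : ℕ} (e : EuclideanSpace ℝ (Fin n)) (c : ℝ)
    (u : M × EuclideanSpace ℝ (Fin n) → ℝ)
    (z : M × EuclideanSpace ℝ (Fin n)) : ℝ :=
  if c < ⟪z.2, e⟫ then max (u z) (u (z.1, reflectHyp e c z.2))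
  else min (u z) (u (z.1, reflectHyp e c z.2))

/-!
The reflection `σ` across `∂H` preserves `μ ⊗ vol` and swaps the two points `z`, `σ z` of each
orbit, and on each orbit polarization replaces the pair of values `(a, a')` by
`(max a a', min a a')`. For a convex `f`, sorting both pairs can only decrease
`f (a - b) + f (a' - b')`: the sorted differences lie between the unsorted ones and have the same
sum. Integrating this over `z` counts every orbit twice on both sides.
-/

section Reflection

variable {n : ℕ} {e : EuclideanSpace ℝ (Fin n)} {c : ℝ}

lemma inner_reflectHyp (he : ‖e‖ = 1) (y : EuclideanSpace ℝ (Fin n)) :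
    ⟪reflectHyp e c y, e⟫ = 2 * c - ⟪y, e⟫ := by
  have hee : ⟪e, e⟫ = (1 : ℝ) := by rw [real_inner_self_eq_norm_sq, he, one_pow]
  simp only [reflectHyp, inner_sub_left, real_inner_smul_left, hee]
  ring

lemma reflectHyp_reflectHyp (he : ‖e‖ = 1) (y : EuclideanSpace ℝ (Fin n)) :
    reflectHyp e c (reflectHyp e c y) = y := by
  conv_lhs => rw [reflectHyp, inner_reflectHyp he, reflectHyp]
  rw [sub_sub, ← add_smul]
  ring_nf
  rw [zero_smul, sub_zero]

lemma reflectHyp_of_inner_eq {y : EuclideanSpace ℝ (Fin n)} (hy : ⟪y, e⟫ = c) :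
    reflectHyp e c y = y := by
  simp [reflectHyp, hy]

lemma continuous_reflectHyp : Continuous (reflectHyp e c) := by
  unfold reflectHyp
  fun_prop

/-- `reflectHyp e c` is the reflection `y ↦ y - 2⟪y, e⟫ e` through `(ℝ ∙ e)ᗮ`, followed by a translation. -/
lemma measurePreserving_reflectHyp (he : ‖e‖ = 1) :
    MeasurePreserving (reflectHyp e c) volume volume := by
  have hσ : reflectHyp e c = (· + (2 * c) • e) ∘
      ((Submodule.reflection (ℝ ∙ e)).trans (LinearIsometryEquiv.neg ℝ)) := by
    funext y
    simp only [Function.comp_apply, LinearIsometryEquiv.trans_apply,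
      LinearIsometryEquiv.coe_neg, Submodule.reflection_singleton_apply, reflectHyp,
      real_inner_comm e y, he]
    module
  rw [hσ]
  exact (measurePreserving_add_right volume _).comp (LinearIsometryEquiv.measurePreserving _)

end Reflection

section Convexity

/-- Two-point Karamata inequality: `(p, q)` is majorized by `(a, b)`. -/
lemma ConvexOn.map_add_map_le_of_add_eq {s : Set ℝ} {f : ℝ → ℝ} (hf : ConvexOn ℝ s f)
    {a b p q : ℝ} (ha : a ∈ s) (hb : b ∈ s) (hap : a ≤ p) (hpb : p ≤ b) (hpq : p + q = a + b) :
    f p + f q ≤ f a + f b := by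
  rcases (hap.trans hpb).eq_or_lt with rfl | hab
  · obtain rfl : p = a := le_antisymm hpb hap
    obtain rfl : q = p := by linarith
    rfl
  · set t := (b - p) / (b - a)
    have ht : t * (b - a) = b - p := div_mul_cancel₀ _ (by linarith)
    have ht0 : 0 ≤ t := div_nonneg (by linarith) (by linarith)
    have ht1 : t ≤ 1 := by rw [div_le_one (by linarith)]; linarith
    have hp : t • a + (1 - t) • b = p := by simp only [smul_eq_mul]; linear_combination -ht
    have hq : (1 - t) • a + t • b = q := by simp only [smul_eq_mul]; linear_combination ht - hpq
    have hfp := hf.2 ha hb ht0 (sub_nonneg.2 ht1) (by ring)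
    have hfq := hf.2 ha hb (sub_nonneg.2 ht1) ht0 (by ring)
    rw [hp] at hfp
    rw [hq] at hfq
    simp only [smul_eq_mul] at hfp hfq
    linarith

lemma ConvexOn.map_sub_max_add_map_sub_min_le {f : ℝ → ℝ} (hf : ConvexOn ℝ Set.univ f)
    (a a' b b' : ℝ) :
    f (max a a' - max b b') + f (min a a' - min b b') ≤ f (a - b) + f (a' - b') := by
  rcases le_total a' a with ha | ha <;> rcases le_total b' b with hb | hb
  · rw [max_eq_left ha, max_eq_left hb, min_eq_right ha, min_eq_right hb]
  · rw [max_eq_left ha, max_eq_right hb, min_eq_right ha, min_eq_left hb, add_comm (f (a - b))]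
    exact hf.map_add_map_le_of_add_eq trivial trivial (by linarith) (by linarith) (by ring)
  · rw [max_eq_right ha, max_eq_left hb, min_eq_left ha, min_eq_right hb]
    exact hf.map_add_map_le_of_add_eq trivial trivial (by linarith) (by linarith) (by ring)
  · rw [max_eq_right ha, max_eq_right hb, min_eq_left ha, min_eq_left hb, add_comm (f (a - b))]

lemma convexOn_abs_rpow {s : ℝ} (hs : 1 ≤ s) : ConvexOn ℝ Set.univ (fun x : ℝ => |x| ^ s) := by
  refine ⟨convex_univ, fun x _ y _ a b ha hb hab => ?_⟩
  simp only [smul_eq_mul]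
  calc |a * x + b * y| ^ s ≤ (a * |x| + b * |y|) ^ s := by
        refine Real.rpow_le_rpow (abs_nonneg _) ?_ (by linarith)
        calc |a * x + b * y| ≤ |a * x| + |b * y| := abs_add_le _ _
          _ = a * |x| + b * |y| := by rw [abs_mul, abs_mul, abs_of_nonneg ha, abs_of_nonneg hb]
    _ ≤ a * |x| ^ s + b * |y| ^ s := by
        simpa using (convexOn_rpow hs).2 (abs_nonneg x) (abs_nonneg y) ha hb hab

end Convexity

section Polarization

variable {M : Type*} {n : ℕ} {e : EuclideanSpace ℝ (Fin n)} {c : ℝ}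
  {w : M × EuclideanSpace ℝ (Fin n) → ℝ} {z : M × EuclideanSpace ℝ (Fin n)}

local notation "σ" z => (Prod.fst z, reflectHyp e c (Prod.snd z))

lemma polarize_of_lt (he : ‖e‖ = 1) (hz : c < ⟪z.2, e⟫) :
    polarize e c w z = max (w z) (w (σ z)) ∧ polarize e c w (σ z) = min (w z) (w (σ z)) := by
  have hσz : ¬ c < ⟪reflectHyp e c z.2, e⟫ := by rw [inner_reflectHyp he]; linarith
  simp [polarize, hz, hσz, reflectHyp_reflectHyp he, min_comm]

lemma polarize_of_le (he : ‖e‖ = 1) (hz : ⟪z.2, e⟫ ≤ c) :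
    polarize e c w z = min (w z) (w (σ z)) ∧ polarize e c w (σ z) = max (w z) (w (σ z)) := by
  refine ⟨by simp [polarize, hz.not_gt], ?_⟩
  rcases hz.lt_or_eq with hz | hz
  · have hσz : c < ⟪reflectHyp e c z.2, e⟫ := by rw [inner_reflectHyp he]; linarith
    simp [polarize, hσz, reflectHyp_reflectHyp he, max_comm]
  · simp [polarize, reflectHyp_of_inner_eq hz]

lemma measurable_polarize [MeasurableSpace M] (hw : Measurable w) :
    Measurable (polarize e c w) := by
  have hσ : Measurable fun z : M × EuclideanSpace ℝ (Fin n) => σ z :=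
    measurable_fst.prodMk (continuous_reflectHyp.measurable.comp measurable_snd)
  have hH : MeasurableSet {z : M × EuclideanSpace ℝ (Fin n) | c < ⟪z.2, e⟫} :=
    measurableSet_lt measurable_const (by fun_prop)
  exact Measurable.ite hH (hw.max (hw.comp hσ)) (hw.min (hw.comp hσ))

lemma ConvexOn.map_polarize_sub_add_le (he : ‖e‖ = 1) {f : ℝ → ℝ}
    (hf : ConvexOn ℝ Set.univ f) (u v : M × EuclideanSpace ℝ (Fin n) → ℝ) (z) :
    f (polarize e c u z - polarize e c v z) + f (polarize e c u (σ z) - polarize e c v (σ z)) ≤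
      f (u z - v z) + f (u (σ z) - v (σ z)) := by
  rcases lt_or_ge c ⟪z.2, e⟫ with hz | hz
  · simp only [polarize_of_lt he hz]
    exact hf.map_sub_max_add_map_sub_min_le _ _ _ _
  · simp only [polarize_of_le he hz]
    rw [add_comm]
    exact hf.map_sub_max_add_map_sub_min_le _ _ _ _

end Polarization

lemma lintegral_le_lintegral_of_add_comp_le {α : Type*} [MeasurableSpace α] {ν : Measure α}
    {σ : α → α} (hσ : MeasurePreserving σ ν ν) {F G : α → ℝ≥0∞} (hF : Measurable F)
    (hG : Measurable G) (hFG : ∀ z, F z + F (σ z) ≤ G z + G (σ z)) :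
    ∫⁻ z, F z ∂ν ≤ ∫⁻ z, G z ∂ν := by
  have htwice : 2 * ∫⁻ z, F z ∂ν ≤ 2 * ∫⁻ z, G z ∂ν :=
    calc 2 * ∫⁻ z, F z ∂ν = ∫⁻ z, F z + F (σ z) ∂ν := by
          rw [lintegral_add_left hF, hσ.lintegral_comp hF, two_mul]
      _ ≤ ∫⁻ z, G z + G (σ z) ∂ν := lintegral_mono hFG
      _ = 2 * ∫⁻ z, G z ∂ν := by
          rw [lintegral_add_left hG, hσ.lintegral_comp hG, two_mul]
  exact (ENNReal.mul_le_mul_iff_right two_ne_zero ENNReal.ofNat_ne_top).1 htwice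

theorem stmt_1_general {M : Type*} [MeasurableSpace M] (μ : Measure M) [SigmaFinite μ]
    {n : ℕ}
    (e : EuclideanSpace ℝ (Fin n)) (he : ‖e‖ = 1) (c : ℝ)
    (s : ℝ) (hs : 1 ≤ s)
    (u v : M × EuclideanSpace ℝ (Fin n) → ℝ)
    (hu : Measurable u)
    (hv : Measurable v) :
    ∫⁻ z, ENNReal.ofReal (|polarize e c u z - polarize e c v z| ^ s) ∂(μ.prod volume) ≤
      ∫⁻ z, ENNReal.ofReal (|u z - v z| ^ s) ∂(μ.prod volume) := by
  have hσ : MeasurePreserving (fun z : M × EuclideanSpace ℝ (Fin n) => (z.1, reflectHyp e c z.2))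
      (μ.prod volume) (μ.prod volume) :=
    (MeasurePreserving.id μ).prod (measurePreserving_reflectHyp he)
  have hPu := measurable_polarize (e := e) (c := c) hu
  have hPv := measurable_polarize (e := e) (c := c) hv
  refine lintegral_le_lintegral_of_add_comp_le hσ (by fun_prop) (by fun_prop) fun z => ?_
  rw [← ENNReal.ofReal_add (by positivity) (by positivity),
    ← ENNReal.ofReal_add (by positivity) (by positivity)]
  exact ENNReal.ofReal_le_ofReal ((convexOn_abs_rpow hs).map_polarize_sub_add_le he u v z)

/-- polarization is non-expansive in every `L^s` (quasi-)norm. -/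
theorem stmt_1 {M : Type*} [MeasurableSpace M] (μ : Measure M) [SigmaFinite μ]
    {n : ℕ} (hn : 1 ≤ n)
    (e : EuclideanSpace ℝ (Fin n)) (he : ‖e‖ = 1) (c : ℝ)
    (s : ℝ) (hs : 1 ≤ s)
    (u v : M × EuclideanSpace ℝ (Fin n) → ℝ)
    (hu : Measurable u) (hu0 : ∀ z, 0 ≤ u z)
    (hv : Measurable v) (hv0 : ∀ z, 0 ≤ v z) :
    ∫⁻ z, ENNReal.ofReal (|polarize e c u z - polarize e c v z| ^ s) ∂(μ.prod volume) ≤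
      ∫⁻ z, ENNReal.ofReal (|u z - v z| ^ s) ∂(μ.prod volume) :=
  stmt_1_general μ e he c s hs u v hu hv

end
end

section
/- Let (M, μ) be a σ-finite measure space, n ≥ 1, and let 1 ≤ s < ∞. For all measurable functions u, v : M × ℝⁿ → [0, ∞) such that vol({y : u(x, y) > c}) < ∞ and vol({y : v(x, y) > c}) < ∞ for every x ∈ M and every c > 0, Steiner symmetrization is non-expansive: ∫ |u* − v*|^s d(μ ⊗ vol) ≤ ∫ |u − v|^s d(μ ⊗ vol) (both sides taken in [0, ∞]). -/
open MeasureTheory Metric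
open scoped RealInnerProductSpace ENNReal

noncomputable section

/-- Steiner symmetrization (with respect to `M`) of a subset of `M × ℝⁿ`:
each slice over `x ∈ M` is replaced by the open ball centered at `0` with the same
Lebesgue measure as the slice `U_x`. -/
def steinerSet {M : Type*} {n : ℕ} (U : Set (M × EuclideanSpace ℝ (Fin n))) :
    Set (M × EuclideanSpace ℝ (Fin n)) :=
  {z | volume (ball (0 : EuclideanSpace ℝ (Fin n)) ‖z.2‖) < volume {y' | (z.1, y') ∈ U}}

/-- Steiner symmetrization (with respect to `M`) of a function `u : M × ℝⁿ → ℝ`: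
`u*(x, y) = sup ({0} ∪ {c > 0 : vol (ball 0 ‖y‖) < vol {y' : u (x, y') > c}})`. -/
def steiner {M : Type*} {n : ℕ} (u : M × EuclideanSpace ℝ (Fin n) → ℝ)
    (z : M × EuclideanSpace ℝ (Fin n)) : ℝ :=
  sSup ({0} ∪ {c : ℝ | 0 < c ∧
    volume (ball (0 : EuclideanSpace ℝ (Fin n)) ‖z.2‖) < volume {y' | c < u (z.1, y')}})

/-!
Tonelli reduces the claim to one slice `x`, i.e. to the Schwarz symmetrization `f ↦ f*` of
`f = u (x, ·)` and `g = v (x, ·)` on `ℝⁿ`. For `b ≥ 0` and `s ≥ 1` there is a measure `ν` on the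
open positive quadrant with `(a - b)₊ ^ s = ν {σ < a, b ≤ τ}`: its density is the mixed derivative
`s (s - 1) (σ - τ) ^ (s - 2)` on `τ < σ`, and for `s = 1` it is Lebesgue measure on the diagonal.
Integrating against `vol` and swapping the integrals gives
`∫ (f - g)₊ ^ s = ∫ vol {σ < f, g ≤ τ} dν(σ, τ)`, so it suffices to compare the sets
`{σ < f*, g* ≤ τ}` and `{σ < f, g ≤ τ}`. Up to the origin the first one is the difference of the
centered balls of volumes `vol {σ < f}` and `vol {τ < g}`, so its volume is at most
`vol {σ < f} - vol {τ < g} ≤ vol {σ < f, g ≤ τ}`.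
-/

open Set Filter Topology

lemma lintegral_Ioo_rpow_sub_right {p : ℝ} (hp : -1 < p) {C : ℝ} (hC : 0 ≤ C) {l r : ℝ}
    (hlr : l < r) :
    ∫⁻ x in Ioo l r, ENNReal.ofReal (C * (x - l) ^ p) =
      ENNReal.ofReal (C * (r - l) ^ (p + 1) / (p + 1)) := by
  have hint : IntervalIntegrable (fun x => C * (x - l) ^ p) volume l r := by
    simpa using ((intervalIntegral.intervalIntegrable_rpow' (a := 0) (b := r - l) hp).comp_sub_right
      l).const_mul C
  rw [← ofReal_integral_eq_lintegral_ofReal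
      ((intervalIntegrable_iff_integrableOn_Ioo_of_le hlr.le).1 hint)
      ((ae_restrict_mem measurableSet_Ioo).mono fun x hx =>
        mul_nonneg hC (Real.rpow_nonneg (sub_nonneg.2 hx.1.le) _)),
    ← integral_Ioc_eq_integral_Ioo, ← intervalIntegral.integral_of_le hlr.le,
    intervalIntegral.integral_const_mul, intervalIntegral.integral_comp_sub_right
      (fun x => x ^ p), sub_self, integral_rpow (Or.inl hp),
    Real.zero_rpow (by linarith), sub_zero, mul_div_assoc]

lemma lintegral_Ioo_rpow_sub_left {p : ℝ} (hp : -1 < p) {C : ℝ} (hC : 0 ≤ C) {l r : ℝ}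
    (hlr : l < r) :
    ∫⁻ x in Ioo l r, ENNReal.ofReal (C * (r - x) ^ p) =
      ENNReal.ofReal (C * (r - l) ^ (p + 1) / (p + 1)) := by
  have hint : IntervalIntegrable (fun x => C * (r - x) ^ p) volume l r := by
    simpa using (((intervalIntegral.intervalIntegrable_rpow' (a := 0) (b := r - l) hp).comp_sub_left
      r).const_mul C).symm
  rw [← ofReal_integral_eq_lintegral_ofReal
      ((intervalIntegrable_iff_integrableOn_Ioo_of_le hlr.le).1 hint)
      ((ae_restrict_mem measurableSet_Ioo).mono fun x hx =>
        mul_nonneg hC (Real.rpow_nonneg (sub_nonneg.2 hx.2.le) _)),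
    ← integral_Ioc_eq_integral_Ioo, ← intervalIntegral.integral_of_le hlr.le,
    intervalIntegral.integral_const_mul, intervalIntegral.integral_comp_sub_left
      (fun x => x ^ p), sub_self, integral_rpow (Or.inl hp),
    Real.zero_rpow (by linarith), sub_zero, mul_div_assoc]

lemma ae_eq_Ioo_of_subset_Ico {a b : ℝ} {J : Set ℝ} (h₁ : Ioo a b ⊆ J) (h₂ : J ⊆ Ico a b) :
    J =ᵐ[volume] Ioo a b :=
  (ae_eq_of_subset_of_measure_ge h₁
    ((measure_mono h₂).trans_eq (measure_congr Ioo_ae_eq_Ico).symm)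
    measurableSet_Ioo.nullMeasurableSet ((measure_mono h₂).trans_lt measure_Ico_lt_top).ne).symm

lemma measurableSet_quadrant (a b : ℝ) : MeasurableSet {p : ℝ × ℝ | p.1 < a ∧ b ≤ p.2} :=
  (measurableSet_lt measurable_fst measurable_const).inter
    (measurableSet_le measurable_const measurable_snd)

lemma exists_measure_quadrant_eq_ofReal_sub :
    ∃ ν : Measure (ℝ × ℝ), SFinite ν ∧ (∀ᵐ p ∂ν, 0 < p.1 ∧ 0 < p.2) ∧
      ∀ a b : ℝ, 0 ≤ b → ν {p | p.1 < a ∧ b ≤ p.2} = ENNReal.ofReal (a - b) := by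
  have hdiag : Measurable fun σ : ℝ => (σ, σ) := measurable_id.prodMk measurable_id
  refine ⟨(volume.restrict (Ioi 0)).map fun σ => (σ, σ), inferInstance, ?_, fun a b hb => ?_⟩
  · exact (ae_map_iff (p := fun p : ℝ × ℝ => 0 < p.1 ∧ 0 < p.2) hdiag.aemeasurable
      (by measurability)).2 ((ae_restrict_mem measurableSet_Ioi).mono fun σ hσ => ⟨hσ, hσ⟩)
  · have hslice : ((fun σ : ℝ => (σ, σ)) ⁻¹' {p : ℝ × ℝ | p.1 < a ∧ b ≤ p.2} ∩ Ioi 0 : Set ℝ)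
        =ᵐ[volume] Ioo b a :=
      ae_eq_Ioo_of_subset_Ico (fun σ hσ => ⟨⟨hσ.2, hσ.1.le⟩, hb.trans_lt hσ.1⟩)
        fun σ hσ => ⟨hσ.1.2, hσ.1.1⟩
    rw [Measure.map_apply hdiag (measurableSet_quadrant a b),
      Measure.restrict_apply' measurableSet_Ioi, measure_congr hslice, Real.volume_Ioo]

def rpowQuadrantMeasure (s : ℝ) : Measure (ℝ × ℝ) :=
  (volume.restrict {p | 0 < p.2 ∧ p.2 < p.1}).withDensity fun p =>
    ENNReal.ofReal (s * (s - 1) * (p.1 - p.2) ^ (s - 2))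

instance (s : ℝ) : SFinite (rpowQuadrantMeasure s) := by
  unfold rpowQuadrantMeasure; infer_instance

lemma ae_pos_rpowQuadrantMeasure (s : ℝ) : ∀ᵐ p ∂rpowQuadrantMeasure s, 0 < p.1 ∧ 0 < p.2 :=
  (withDensity_absolutelyContinuous _ _).ae_le <|
    (ae_restrict_mem (by measurability)).mono fun _ hp => ⟨hp.1.trans hp.2, hp.1⟩

lemma rpowQuadrantMeasure_quadrant {s : ℝ} (hs : 1 < s) (a : ℝ) {b : ℝ} (hb : 0 ≤ b) :
    rpowQuadrantMeasure s {p | p.1 < a ∧ b ≤ p.2} = ENNReal.ofReal (max (a - b) 0 ^ s) := by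
  set R := {p : ℝ × ℝ | p.1 < a ∧ b ≤ p.2}
  set T := {p : ℝ × ℝ | 0 < p.2 ∧ p.2 < p.1}
  set J := {τ : ℝ | b ≤ τ ∧ 0 < τ ∧ τ < a}
  set k := fun p : ℝ × ℝ => ENNReal.ofReal (s * (s - 1) * (p.1 - p.2) ^ (s - 2))
  have hRT : MeasurableSet (R ∩ T) := (measurableSet_quadrant a b).inter (by measurability)
  have inner : ∀ τ, ∫⁻ σ, (R ∩ T).indicator k (σ, τ) =
      J.indicator (fun τ => ENNReal.ofReal (s * (a - τ) ^ (s - 1))) τ := by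
    intro τ
    by_cases hτ : τ ∈ J
    · have hslice : ∀ σ, (R ∩ T).indicator k (σ, τ) =
          (Ioo τ a).indicator (fun σ => k (σ, τ)) σ := by
        intro σ
        simp [indicator_apply, R, T, hτ.1, hτ.2.1, and_comm]
      rw [lintegral_congr hslice, lintegral_indicator measurableSet_Ioo,
        lintegral_Ioo_rpow_sub_right (by linarith) (by nlinarith) hτ.2.2, indicator_of_mem hτ,
        show s - 2 + 1 = s - 1 by ring]
      congr 1
      field_simp [show s - 1 ≠ 0 by linarith]
    · rw [indicator_of_notMem hτ, ← lintegral_zero]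
      refine lintegral_congr fun σ => indicator_of_notMem (fun h => hτ ?_) _
      exact ⟨h.1.2, h.2.1, h.2.2.trans h.1.1⟩
  have hJ : J =ᵐ[volume] Ioo b a :=
    ae_eq_Ioo_of_subset_Ico (fun τ hτ => ⟨hτ.1.le, hb.trans_lt hτ.1, hτ.2⟩)
      fun τ hτ => ⟨hτ.1, hτ.2.2⟩
  rw [rpowQuadrantMeasure, withDensity_apply _ (measurableSet_quadrant a b),
    Measure.restrict_restrict (measurableSet_quadrant a b), ← lintegral_indicator hRT,
    Measure.volume_eq_prod, lintegral_prod_symm _ (((by fun_prop : Measurable k).indicator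
      hRT).aemeasurable), lintegral_congr inner, lintegral_indicator (by measurability),
    setLIntegral_congr hJ]
  rcases lt_or_ge b a with hba | hab
  · rw [lintegral_Ioo_rpow_sub_left (by linarith) (by linarith) hba, sub_add_cancel,
      mul_div_cancel_left₀ _ (by linarith), max_eq_left (by linarith)]
  · rw [Ioo_eq_empty (not_lt.2 hab), Measure.restrict_empty, lintegral_zero_measure,
      max_eq_right (by linarith), Real.zero_rpow (by linarith), ENNReal.ofReal_zero]

lemma exists_measure_quadrant_eq_posPart_rpow {s : ℝ} (hs : 1 ≤ s) :
    ∃ ν : Measure (ℝ × ℝ), SFinite ν ∧ (∀ᵐ p ∂ν, 0 < p.1 ∧ 0 < p.2) ∧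
      ∀ a b : ℝ, 0 ≤ b → ν {p | p.1 < a ∧ b ≤ p.2} = ENNReal.ofReal (max (a - b) 0 ^ s) := by
  rcases hs.eq_or_lt with rfl | hs
  · obtain ⟨ν, hν, hpos, hquad⟩ := exists_measure_quadrant_eq_ofReal_sub
    refine ⟨ν, hν, hpos, fun a b hb => ?_⟩
    rw [hquad a b hb, Real.rpow_one, ENNReal.ofReal_max, ENNReal.ofReal_zero, max_eq_left zero_le]
  · exact ⟨rpowQuadrantMeasure s, inferInstance, ae_pos_rpowQuadrantMeasure s,
      fun a _ hb => rpowQuadrantMeasure_quadrant hs a hb⟩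

lemma ENNReal.ofReal_abs_sub_rpow {s : ℝ} (hs : 0 < s) (a b : ℝ) :
    ENNReal.ofReal (|a - b| ^ s) =
      ENNReal.ofReal (max (a - b) 0 ^ s) + ENNReal.ofReal (max (b - a) 0 ^ s) := by
  rcases le_total a b with h | h
  · rw [abs_sub_comm, abs_of_nonneg (sub_nonneg.2 h), max_eq_right (sub_nonpos.2 h),
      max_eq_left (sub_nonneg.2 h), Real.zero_rpow hs.ne', ENNReal.ofReal_zero, zero_add]
  · rw [abs_of_nonneg (sub_nonneg.2 h), max_eq_left (sub_nonneg.2 h),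
      max_eq_right (sub_nonpos.2 h), Real.zero_rpow hs.ne', ENNReal.ofReal_zero, add_zero]

section Comparison

variable {α : Type*} [MeasurableSpace α] {μ : Measure α} [SFinite μ]

lemma lintegral_measure_quadrant_le {ν : Measure (ℝ × ℝ)} [SFinite ν] {f g F G : α → ℝ}
    (hf : Measurable f) (hg : Measurable g) (hF : Measurable F) (hG : Measurable G)
    (h : ∀ᵐ p ∂ν,
      μ ({y | p.1 < F y} ∩ {y | G y ≤ p.2}) ≤ μ ({y | p.1 < f y} ∩ {y | g y ≤ p.2})) :
    ∫⁻ y, ν {p | p.1 < F y ∧ G y ≤ p.2} ∂μ ≤ ∫⁻ y, ν {p | p.1 < f y ∧ g y ≤ p.2} ∂μ := by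
  have fubini : ∀ φ ψ : α → ℝ, Measurable φ → Measurable ψ →
      ∫⁻ y, ν {p | p.1 < φ y ∧ ψ y ≤ p.2} ∂μ =
        ∫⁻ p, μ ({y | p.1 < φ y} ∩ {y | ψ y ≤ p.2}) ∂ν := by
    intro φ ψ hφ hψ
    have hR : MeasurableSet {q : α × (ℝ × ℝ) | q.2.1 < φ q.1 ∧ ψ q.1 ≤ q.2.2} :=
      (measurableSet_lt (measurable_fst.comp measurable_snd) (hφ.comp measurable_fst)).inter
        (measurableSet_le (hψ.comp measurable_fst) (measurable_snd.comp measurable_snd))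
    exact (Measure.prod_apply hR).symm.trans (Measure.prod_apply_symm hR)
  rw [fubini F G hF hG, fubini f g hf hg]
  exact lintegral_mono_ae h

lemma lintegral_posPart_sub_rpow_le {s : ℝ} (hs : 1 ≤ s) {f g F G : α → ℝ}
    (hf : Measurable f) (hg : Measurable g) (hF : Measurable F) (hG : Measurable G)
    (hg0 : ∀ y, 0 ≤ g y) (hG0 : ∀ y, 0 ≤ G y)
    (h : ∀ σ τ, 0 < σ → 0 < τ →
      μ ({y | σ < F y} ∩ {y | G y ≤ τ}) ≤ μ ({y | σ < f y} ∩ {y | g y ≤ τ})) :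
    ∫⁻ y, ENNReal.ofReal (max (F y - G y) 0 ^ s) ∂μ ≤
      ∫⁻ y, ENNReal.ofReal (max (f y - g y) 0 ^ s) ∂μ := by
  obtain ⟨ν, _, hpos, hquad⟩ := exists_measure_quadrant_eq_posPart_rpow hs
  calc ∫⁻ y, ENNReal.ofReal (max (F y - G y) 0 ^ s) ∂μ
      = ∫⁻ y, ν {p | p.1 < F y ∧ G y ≤ p.2} ∂μ :=
        lintegral_congr fun y => (hquad _ _ (hG0 y)).symm
    _ ≤ ∫⁻ y, ν {p | p.1 < f y ∧ g y ≤ p.2} ∂μ :=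
        lintegral_measure_quadrant_le hf hg hF hG (hpos.mono fun p hp => h _ _ hp.1 hp.2)
    _ = ∫⁻ y, ENNReal.ofReal (max (f y - g y) 0 ^ s) ∂μ :=
        lintegral_congr fun y => hquad _ _ (hg0 y)

lemma lintegral_abs_sub_rpow_le {s : ℝ} (hs : 1 ≤ s) {f g F G : α → ℝ}
    (hf : Measurable f) (hg : Measurable g) (hF : Measurable F) (hG : Measurable G)
    (hf0 : ∀ y, 0 ≤ f y) (hg0 : ∀ y, 0 ≤ g y) (hF0 : ∀ y, 0 ≤ F y) (hG0 : ∀ y, 0 ≤ G y)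
    (hFG : ∀ σ τ, 0 < σ → 0 < τ →
      μ ({y | σ < F y} ∩ {y | G y ≤ τ}) ≤ μ ({y | σ < f y} ∩ {y | g y ≤ τ}))
    (hGF : ∀ σ τ, 0 < σ → 0 < τ →
      μ ({y | σ < G y} ∩ {y | F y ≤ τ}) ≤ μ ({y | σ < g y} ∩ {y | f y ≤ τ})) :
    ∫⁻ y, ENNReal.ofReal (|F y - G y| ^ s) ∂μ ≤ ∫⁻ y, ENNReal.ofReal (|f y - g y| ^ s) ∂μ := by
  have hpos : ∀ {φ ψ : α → ℝ}, Measurable φ → Measurable ψ →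
      Measurable fun y => ENNReal.ofReal (max (φ y - ψ y) 0 ^ s) :=
    fun hφ hψ => (((hφ.sub hψ).max measurable_const).pow_const s).ennreal_ofReal
  simp only [ENNReal.ofReal_abs_sub_rpow (zero_lt_one.trans_le hs)]
  rw [lintegral_add_left (hpos hF hG), lintegral_add_left (hpos hf hg)]
  exact add_le_add (lintegral_posPart_sub_rpow_le hs hf hg hF hG hg0 hG0 hFG)
    (lintegral_posPart_sub_rpow_le hs hg hf hG hF hf0 hF0 hGF)

end Comparison

section DistributionFunction

variable {α : Type*} [MeasurableSpace α] {μ : Measure α}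

lemma tendsto_measure_setOf_lt_atTop {f : α → ℝ} (hf : Measurable f) {c₀ : ℝ}
    (h₀ : μ {y | c₀ < f y} ≠ ∞) : Tendsto (fun c => μ {y | c < f y}) atTop (𝓝 0) := by
  have hInter : ⋂ c : ℝ, {y | c < f y} = ∅ :=
    eq_empty_of_forall_notMem fun y hy => lt_irrefl (f y) (mem_iInter.1 hy (f y))
  simpa [Function.comp_def, hInter] using tendsto_measure_iInter_atTop
    (fun c => (measurableSet_lt measurable_const hf).nullMeasurableSet)
    (fun a b hab y (hy : b < f y) => hab.trans_lt hy) ⟨c₀, h₀⟩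

lemma exists_gt_lt_measure_setOf_lt {f : α → ℝ} {c : ℝ} {m : ℝ≥0∞}
    (h : m < μ {y | c < f y}) : ∃ c' > c, m < μ {y | c' < f y} := by
  obtain ⟨u, hu_anti, hu_gt, hu_lim⟩ := exists_seq_strictAnti_tendsto c
  have hU : {y | c < f y} = ⋃ k, {y | u k < f y} := by
    ext y
    simp only [mem_ofPred_eq, mem_iUnion]
    exact ⟨fun hy => (hu_lim.eventually (gt_mem_nhds hy)).exists,
      fun ⟨k, hk⟩ => (hu_gt k).trans hk⟩
  have hmono : Monotone fun k => {y | u k < f y} := fun i j hij y (hy : u i < f y) =>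
    (hu_anti.antitone hij).trans_lt hy
  rw [hU, hmono.measure_iUnion, lt_iSup_iff] at h
  obtain ⟨k, hk⟩ := h
  exact ⟨u k, hu_gt k, hk⟩

end DistributionFunction

lemma measurable_of_measurableSet_lt_of_nonneg {δ : Type*} [MeasurableSpace δ] {g : δ → ℝ}
    (hg0 : ∀ x, 0 ≤ g x) (h : ∀ c, 0 ≤ c → MeasurableSet {x | c < g x}) : Measurable g := by
  refine measurable_of_Ioi fun c => ?_
  rcases lt_or_ge c 0 with hc | hc
  · simp [preimage, hc.trans_le (hg0 _)]
  · exact h c hc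

section Schwarz

variable {E : Type*} [NormedAddCommGroup E] [MeasurableSpace E]

def schwarz (μ : Measure E) (f : E → ℝ) (y : E) : ℝ :=
  sSup ({0} ∪ {c : ℝ | 0 < c ∧ μ (ball (0 : E) ‖y‖) < μ {y' | c < f y'}})

variable {μ : Measure E}

lemma schwarz_nonneg (f : E → ℝ) (y : E) : 0 ≤ schwarz μ f y :=
  Real.sSup_nonneg fun _ hc => hc.elim (fun h => h.ge) fun h => h.1.le

lemma lt_schwarz_iff {f : E → ℝ} (hf : Measurable f) (hfin : ∀ c, 0 < c → μ {y | c < f y} < ∞)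
    {y : E} (hy : 0 < μ (ball 0 ‖y‖)) {c : ℝ} (hc : 0 ≤ c) :
    c < schwarz μ f y ↔ μ (ball 0 ‖y‖) < μ {y' | c < f y'} := by
  have hbdd : BddAbove ({0} ∪ {c : ℝ | 0 < c ∧ μ (ball (0 : E) ‖y‖) < μ {y' | c < f y'}}) := by
    obtain ⟨b, hb⟩ := ((tendsto_measure_setOf_lt_atTop hf (hfin 1 one_pos).ne).eventually
      (gt_mem_nhds hy)).exists_forall_of_atTop
    refine bddAbove_singleton.union ⟨b, fun c' hc' => ?_⟩
    by_contra! hbc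
    exact (hb c' hbc.le).not_gt hc'.2
  constructor
  · intro h
    obtain ⟨b, hb, hcb⟩ := (lt_csSup_iff hbdd ⟨0, Or.inl rfl⟩).1 h
    rcases hb with rfl | hb
    · exact absurd hcb hc.not_gt
    · exact hb.2.trans_le (measure_mono fun y' (hy' : b < f y') => hcb.trans hy')
  · intro h
    obtain ⟨c', hcc', hc'⟩ := exists_gt_lt_measure_setOf_lt h
    exact hcc'.trans_le (le_csSup hbdd (Or.inr ⟨hc.trans_lt hcc', hc'⟩))

variable [OpensMeasurableSpace E]

lemma measurable_measure_ball_norm : Measurable fun y : E => μ (ball 0 ‖y‖) :=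
  (Monotone.measurable fun _ _ h => measure_mono (ball_subset_ball h)).comp measurable_norm

lemma measurable_schwarz [μ.IsOpenPosMeasure] {f : E → ℝ} (hf : Measurable f)
    (hfin : ∀ c, 0 < c → μ {y | c < f y} < ∞) : Measurable (schwarz μ f) := by
  refine measurable_of_measurableSet_lt_of_nonneg (schwarz_nonneg f) fun c hc => ?_
  have hset : {y | c < schwarz μ f y} =
      ({y | μ (ball 0 ‖y‖) < μ {y' | c < f y'}} ∩ {0}ᶜ) ∪ ({y | c < schwarz μ f y} ∩ {0}) := by
    ext y
    by_cases hy : y = 0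
    · simp [hy]
    · simp [hy, lt_schwarz_iff hf hfin (measure_ball_pos μ 0 (norm_pos_iff.2 hy)) hc]
  rw [hset]
  exact ((measurableSet_lt measurable_measure_ball_norm measurable_const).inter
    (measurableSet_singleton 0).compl).union
    ((subsingleton_singleton.anti inter_subset_right).measurableSet)

end Schwarz

section HaarSchwarz

variable {E : Type*} [NormedAddCommGroup E] [NormedSpace ℝ E] [FiniteDimensional ℝ E]
  [Nontrivial E] [MeasurableSpace E] [BorelSpace E] {μ : Measure E} [μ.IsAddHaarMeasure]

lemma addHaar_ball_lt_addHaar_ball_iff {r R : ℝ} (hr : 0 ≤ r) (hR : 0 ≤ R) :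
    μ (ball (0 : E) r) < μ (ball 0 R) ↔ r < R := by
  rw [Measure.addHaar_ball μ 0 hr, Measure.addHaar_ball μ 0 hR,
    ENNReal.mul_lt_mul_iff_left (measure_ball_pos μ 0 one_pos).ne' measure_ball_lt_top.ne,
    ENNReal.ofReal_lt_ofReal_iff_of_nonneg (pow_nonneg hr _),
    pow_lt_pow_iff_left₀ hr hR Module.finrank_pos.ne']

lemma exists_addHaar_ball_eq {m : ℝ≥0∞} (hm : m ≠ ∞) :
    ∃ R, 0 ≤ R ∧ μ (ball (0 : E) R) = m := by
  set κ := μ (ball (0 : E) 1)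
  have hκ0 : κ ≠ 0 := (measure_ball_pos μ 0 one_pos).ne'
  have hκ : κ ≠ ∞ := measure_ball_lt_top.ne
  refine ⟨(m / κ).toReal ^ ((Module.finrank ℝ E : ℝ)⁻¹), by positivity, ?_⟩
  rw [Measure.addHaar_ball μ 0 (by positivity),
    Real.rpow_inv_natCast_pow ENNReal.toReal_nonneg Module.finrank_pos.ne',
    ENNReal.ofReal_toReal (ENNReal.div_lt_top hm hκ0).ne, ENNReal.div_mul_cancel hκ0 hκ]

lemma measure_setOf_measure_ball_lt {m : ℝ≥0∞} (hm : m ≠ ∞) :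
    μ {y : E | μ (ball 0 ‖y‖) < m} = m := by
  obtain ⟨R, hR, rfl⟩ := exists_addHaar_ball_eq (μ := μ) hm
  have hset : {y : E | μ (ball 0 ‖y‖) < μ (ball 0 R)} = ball 0 R := by
    ext y
    simp [addHaar_ball_lt_addHaar_ball_iff (norm_nonneg y) hR]
  rw [hset]

lemma measure_lt_schwarz_inter_schwarz_le {f g : E → ℝ} (hf : Measurable f) (hg : Measurable g)
    (hffin : ∀ c, 0 < c → μ {y | c < f y} < ∞) (hgfin : ∀ c, 0 < c → μ {y | c < g y} < ∞)
    {σ τ : ℝ} (hσ : 0 < σ) (hτ : 0 < τ) :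
    μ ({y | σ < schwarz μ f y} ∩ {y | schwarz μ g y ≤ τ}) ≤
      μ ({y | σ < f y} ∩ {y | g y ≤ τ}) := by
  set m₁ := μ {y | σ < f y}
  set m₂ := μ {y | τ < g y}
  have hm₁ : m₁ ≠ ∞ := (hffin σ hσ).ne
  have hmin : min m₁ m₂ ≠ ∞ := (min_le_left _ _ |>.trans_lt hm₁.lt_top).ne
  have hsub : {y | σ < schwarz μ f y} ∩ {y | schwarz μ g y ≤ τ} ⊆
      ({y | μ (ball 0 ‖y‖) < m₁} \ {y | μ (ball 0 ‖y‖) < min m₁ m₂}) ∪ {0} := by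
    intro y hy
    by_cases hy0 : y = 0
    · exact Or.inr hy0
    have hball := measure_ball_pos μ 0 (norm_pos_iff.2 hy0)
    rw [mem_inter_iff, mem_ofPred_eq, mem_ofPred_eq, lt_schwarz_iff hf hffin hball hσ.le,
      ← not_lt, lt_schwarz_iff hg hgfin hball hτ.le] at hy
    exact Or.inl ⟨hy.1, fun h => hy.2 (lt_min_iff.1 h).2⟩
  have hdiff :
      μ ({y | μ (ball 0 ‖y‖) < m₁} \ {y | μ (ball 0 ‖y‖) < min m₁ m₂}) = m₁ - m₂ := by
    have hmono : {y : E | μ (ball 0 ‖y‖) < min m₁ m₂} ⊆ {y | μ (ball 0 ‖y‖) < m₁} :=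
      fun _ hy => lt_of_lt_of_le (b := min m₁ m₂) hy (min_le_left _ _)
    rw [measure_sdiff hmono
        (measurableSet_lt measurable_measure_ball_norm measurable_const).nullMeasurableSet
        (by rw [measure_setOf_measure_ball_lt hmin]; exact hmin),
      measure_setOf_measure_ball_lt hm₁, measure_setOf_measure_ball_lt hmin, tsub_min]
  calc μ ({y | σ < schwarz μ f y} ∩ {y | schwarz μ g y ≤ τ})
      ≤ m₁ - m₂ := hdiff ▸ (measure_mono hsub).trans ((measure_union_le _ _).trans_eq (by simp))
    _ ≤ μ ({y | σ < f y} ∩ {y | g y ≤ τ}) :=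
        tsub_le_iff_right.2 <| (measure_le_inter_add_sdiff μ _ {y | g y ≤ τ}).trans <|
          add_le_add le_rfl <| measure_mono fun y hy => (not_le.1 hy.2 : τ < g y)

lemma lintegral_abs_schwarz_sub_rpow_le {s : ℝ} (hs : 1 ≤ s) {f g : E → ℝ}
    (hf : Measurable f) (hg : Measurable g) (hf0 : ∀ y, 0 ≤ f y) (hg0 : ∀ y, 0 ≤ g y)
    (hffin : ∀ c, 0 < c → μ {y | c < f y} < ∞) (hgfin : ∀ c, 0 < c → μ {y | c < g y} < ∞) :
    ∫⁻ y, ENNReal.ofReal (|schwarz μ f y - schwarz μ g y| ^ s) ∂μ ≤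
      ∫⁻ y, ENNReal.ofReal (|f y - g y| ^ s) ∂μ :=
  lintegral_abs_sub_rpow_le hs hf hg (measurable_schwarz hf hffin) (measurable_schwarz hg hgfin)
    hf0 hg0 (schwarz_nonneg f) (schwarz_nonneg g)
    (fun _ _ hσ hτ => measure_lt_schwarz_inter_schwarz_le hf hg hffin hgfin hσ hτ)
    (fun _ _ hσ hτ => measure_lt_schwarz_inter_schwarz_le hg hf hgfin hffin hσ hτ)

/-- At `y = 0` the set in `schwarz` may be unbounded (then `sSup` gives the junk value `0`), so
measurability is proved for the version that vanishes on `M × {0}`, a null set. -/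
lemma aemeasurable_schwarz_section {M : Type*} [MeasurableSpace M] (ν : Measure M)
    {u : M × E → ℝ} (hu : Measurable u) (hufin : ∀ x c, 0 < c → μ {y | c < u (x, y)} < ∞) :
    AEMeasurable (fun z : M × E => schwarz μ (fun y => u (z.1, y)) z.2) (ν.prod μ) := by
  set S := fun z : M × E => schwarz μ (fun y => u (z.1, y)) z.2
  have hmeas : Measurable ({z : M × E | z.2 ≠ 0}.indicator S) := by
    refine measurable_of_measurableSet_lt_of_nonneg
      (indicator_nonneg fun z _ => schwarz_nonneg _ _) fun c hc => ?_
    have hset : {z | c < {z : M × E | z.2 ≠ 0}.indicator S z} =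
        {z | z.2 ≠ 0} ∩ {z | μ (ball 0 ‖z.2‖) < μ (Prod.mk z.1 ⁻¹' {p | c < u p})} := by
      ext z
      by_cases hz : z.2 = 0
      · simp [hz, hc.not_gt]
      · rw [mem_ofPred_eq, indicator_of_mem hz]
        simp only [mem_inter_iff, mem_ofPred_eq, ne_eq, hz, not_false_eq_true, true_and]
        exact lt_schwarz_iff (hu.comp measurable_prodMk_left) (hufin z.1)
          (measure_ball_pos μ 0 (norm_pos_iff.2 hz)) hc
    rw [hset]
    exact ((measurableSet_singleton 0).preimage measurable_snd).compl.inter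
      (measurableSet_lt (measurable_measure_ball_norm.comp measurable_snd)
        ((measurable_measure_prodMk_left (measurableSet_lt measurable_const hu)).comp
          measurable_fst))
  refine ⟨_, hmeas, ?_⟩
  have hnull : ∀ᵐ z ∂ν.prod μ, z.2 ≠ 0 := by
    have hzero : {z : M × E | ¬z.2 ≠ 0} = univ ×ˢ {0} := by ext; simp
    rw [ae_iff, hzero, Measure.prod_prod, measure_singleton, mul_zero]
  filter_upwards [hnull] with z hz
  rw [indicator_of_mem hz]

end HaarSchwarz

lemma steiner_apply {M : Type*} {n : ℕ} (u : M × EuclideanSpace ℝ (Fin n) → ℝ) (x : M)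
    (y : EuclideanSpace ℝ (Fin n)) : steiner u (x, y) = schwarz volume (fun y' => u (x, y')) y :=
  rfl

theorem stmt_7_general {M : Type*} [MeasurableSpace M] (μ : Measure M)
    {n : ℕ} (hn : 1 ≤ n) (s : ℝ) (hs : 1 ≤ s)
    (u v : M × EuclideanSpace ℝ (Fin n) → ℝ)
    (hu : Measurable u) (hu0 : ∀ z, 0 ≤ u z)
    (hv : Measurable v) (hv0 : ∀ z, 0 ≤ v z)
    (hufin : ∀ (x : M) (c : ℝ), 0 < c → volume {y | c < u (x, y)} < ⊤)
    (hvfin : ∀ (x : M) (c : ℝ), 0 < c → volume {y | c < v (x, y)} < ⊤) :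
    ∫⁻ z, ENNReal.ofReal (|steiner u z - steiner v z| ^ s) ∂(μ.prod volume) ≤
      ∫⁻ z, ENNReal.ofReal (|u z - v z| ^ s) ∂(μ.prod volume) := by
  have : Nonempty (Fin n) := ⟨⟨0, hn⟩⟩
  have hu' : AEMeasurable (steiner u) (μ.prod volume) :=
    aemeasurable_schwarz_section (μ := volume) μ hu hufin
  have hv' : AEMeasurable (steiner v) (μ.prod volume) :=
    aemeasurable_schwarz_section (μ := volume) μ hv hvfin
  rw [lintegral_prod _ (by fun_prop), lintegral_prod _ (by fun_prop)]
  refine lintegral_mono fun x => ?_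
  simp only [steiner_apply]
  exact lintegral_abs_schwarz_sub_rpow_le hs (hu.comp measurable_prodMk_left)
    (hv.comp measurable_prodMk_left) (fun y => hu0 (x, y)) (fun y => hv0 (x, y)) (hufin x)
    (hvfin x)

/-- Steiner symmetrization is non-expansive in every `L^s` norm. -/
theorem stmt_7 {M : Type*} [MeasurableSpace M] (μ : Measure M) [SigmaFinite μ]
    {n : ℕ} (hn : 1 ≤ n) (s : ℝ) (hs : 1 ≤ s)
    (u v : M × EuclideanSpace ℝ (Fin n) → ℝ)
    (hu : Measurable u) (hu0 : ∀ z, 0 ≤ u z)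
    (hv : Measurable v) (hv0 : ∀ z, 0 ≤ v z)
    (hufin : ∀ (x : M) (c : ℝ), 0 < c → volume {y | c < u (x, y)} < ⊤)
    (hvfin : ∀ (x : M) (c : ℝ), 0 < c → volume {y | c < v (x, y)} < ⊤) :
    ∫⁻ z, ENNReal.ofReal (|steiner u z - steiner v z| ^ s) ∂(μ.prod volume) ≤
      ∫⁻ z, ENNReal.ofReal (|u z - v z| ^ s) ∂(μ.prod volume) :=
  stmt_7_general μ hn s hs u v hu hu0 hv hv0 hufin hvfin
end
end
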